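/- Let g_1,...,g_b: {-1,1}^r → {-1,1} each satisfy Ê g_j(S) = 0 for all S with 1 ≤ |S| ≤ k, and let F: {-1,1}^b → ℝ be any function. Then f: {-1,1}^{br} → ℝ defined by f(x) = F(g_1(x_1,...,x_r), ..., g_b(x_{(b-1)r+1},...,x_{br})) satisfies f̂(S) = 0 for all S ⊆ {1,...,br} with 1 ≤ |S| ≤ k. -/

import Mathlib

/-!
Expand `F` in indicators: `f x = ∑_w F w · ∏_j 1[g_j(x_j) = w_j]`. Each summand is a product of
functions of disjoint blocks of variables, so its Fourier coefficient at `S` is the product of the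
coefficients of the factors at the slices of `S`. A nonempty `S` with `|S| ≤ k` meets some block
`j` in a slice `T` with `1 ≤ |T| ≤ k`, and `1[g_j = w_j] = (1 + g_j · w_j) / 2` has vanishing
coefficient at `T`: the constant has none, and `g_j` has none by hypothesis.
-/

/-- The value in `{-1,1}` of a Boolean (`1 = TRUE`). -/
noncomputable def bval (v : Bool) : ℝ := if v then 1 else -1

/-- Fourier coefficient `f̂(S) = E[f · W_S]` on the uniform cube `{-1,1}^ι`. -/
noncomputable def cubeCoeff {ι : Type*} [Fintype ι] [DecidableEq ι]
    (f : (ι → Bool) → ℝ) (S : Finset ι) : ℝ :=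
  (∑ x, f x * ∏ i ∈ S, (if x i then (1 : ℝ) else -1)) / 2 ^ (Fintype.card ι)

lemma ite_eq_eq_bval_mul_bval (u v : Bool) :
    (if u = v then 1 else 0 : ℝ) = (1 + bval u * bval v) / 2 := by
  cases u <;> cases v <;> norm_num [bval]

lemma sum_prod_bval_eq_zero {ι : Type*} [Fintype ι] [DecidableEq ι] {T : Finset ι}
    (hT : T.Nonempty) : ∑ y : ι → Bool, ∏ i ∈ T, bval (y i) = 0 := by
  obtain ⟨i₀, hi₀⟩ := hT
  simp_rw [← Fintype.prod_ite_mem T]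
  rw [← Fintype.prod_sum (fun i c => if i ∈ T then bval c else 1)]
  exact Finset.prod_eq_zero (Finset.mem_univ i₀) (by simp [hi₀, bval])

section Linearity

variable {ι : Type*} [Fintype ι] [DecidableEq ι]

lemma cubeCoeff_eq (f : (ι → Bool) → ℝ) (S : Finset ι) :
    cubeCoeff f S = (∑ x, f x * ∏ i ∈ S, bval (x i)) / 2 ^ Fintype.card ι :=
  rfl

lemma cubeCoeff_add (f g : (ι → Bool) → ℝ) (S : Finset ι) :
    cubeCoeff (fun x => f x + g x) S = cubeCoeff f S + cubeCoeff g S := by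
  simp only [cubeCoeff_eq, add_mul, Finset.sum_add_distrib, add_div]

lemma cubeCoeff_const_mul (c : ℝ) (f : (ι → Bool) → ℝ) (S : Finset ι) :
    cubeCoeff (fun x => c * f x) S = c * cubeCoeff f S := by
  simp only [cubeCoeff_eq, mul_assoc, ← Finset.mul_sum, mul_div_assoc]

lemma cubeCoeff_sum {α : Type*} (s : Finset α) (f : α → (ι → Bool) → ℝ) (S : Finset ι) :
    cubeCoeff (fun x => ∑ a ∈ s, f a x) S = ∑ a ∈ s, cubeCoeff (f a) S := by
  simp only [cubeCoeff_eq, Finset.sum_mul, ← Finset.sum_div]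
  rw [Finset.sum_comm]

lemma cubeCoeff_const_of_nonempty (c : ℝ) {S : Finset ι} (hS : S.Nonempty) :
    cubeCoeff (fun _ => c) S = 0 := by
  rw [cubeCoeff_eq, ← Finset.mul_sum, sum_prod_bval_eq_zero hS, mul_zero, zero_div]

end Linearity

section Blocks

variable {κ ι : Type*}

noncomputable def blockSlice (S : Finset (κ × ι)) (j : κ) : Finset ι :=
  S.preimage (Prod.mk j) (Prod.mk_right_injective j).injOn

@[simp]
lemma mem_blockSlice {S : Finset (κ × ι)} {j : κ} {i : ι} : i ∈ blockSlice S j ↔ (j, i) ∈ S :=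
  Finset.mem_preimage

lemma card_blockSlice_le (S : Finset (κ × ι)) (j : κ) : (blockSlice S j).card ≤ S.card :=
  Finset.card_le_card_of_injOn (Prod.mk j) (fun _ hi => mem_blockSlice.mp hi)
    (Prod.mk_right_injective j).injOn

lemma prod_eq_prod_blockSlice [Fintype κ] {M : Type*} [CommMonoid M] (S : Finset (κ × ι))
    (φ : κ × ι → M) : ∏ p ∈ S, φ p = ∏ j, ∏ i ∈ blockSlice S j, φ (j, i) :=
  Finset.prod_finset_product S Finset.univ (blockSlice S) (by simp)

variable [Fintype κ] [DecidableEq κ] [Fintype ι] [DecidableEq ι]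

theorem cubeCoeff_prod_blocks (h : κ → (ι → Bool) → ℝ) (S : Finset (κ × ι)) :
    cubeCoeff (fun x => ∏ j, h j fun i => x (j, i)) S
      = ∏ j, cubeCoeff (h j) (blockSlice S j) := by
  have hsum : ∑ x : κ × ι → Bool, (∏ j, h j fun i => x (j, i)) * ∏ p ∈ S, bval (x p)
      = ∏ j, ∑ y : ι → Bool, h j y * ∏ i ∈ blockSlice S j, bval (y i) := by
    rw [Fintype.prod_sum, ← (Equiv.curry κ ι Bool).sum_comp]
    refine Fintype.sum_congr _ _ fun x => ?_
    rw [prod_eq_prod_blockSlice, ← Finset.prod_mul_distrib]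
    rfl
  have hcard : (2 : ℝ) ^ Fintype.card (κ × ι) = ∏ _j : κ, (2 : ℝ) ^ Fintype.card ι := by
    rw [Finset.prod_const, Finset.card_univ, ← pow_mul, Fintype.card_prod, mul_comm]
  simp only [cubeCoeff_eq, Finset.prod_div_distrib, hsum, hcard]

end Blocks

lemma cubeCoeff_ite_eq_of_nonempty {ι : Type*} [Fintype ι] [DecidableEq ι]
    (g : (ι → Bool) → Bool) (v : Bool) {T : Finset ι} (hT : T.Nonempty)
    (hg : cubeCoeff (fun y => bval (g y)) T = 0) :
    cubeCoeff (fun y => if g y = v then 1 else 0) T = 0 := by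
  have hsplit : (fun y => if g y = v then (1 : ℝ) else 0)
      = fun y => 1 / 2 + bval v / 2 * bval (g y) := by
    funext y
    rw [ite_eq_eq_bval_mul_bval]
    ring
  rw [hsplit, cubeCoeff_add, cubeCoeff_const_mul, cubeCoeff_const_of_nonempty _ hT, hg,
    mul_zero, add_zero]

lemma eq_sum_mul_prod_ite_eq {κ : Type*} [Fintype κ] [DecidableEq κ]
    (F : (κ → Bool) → ℝ) (z : κ → Bool) :
    F z = ∑ w, F w * ∏ j, if z j = w j then 1 else 0 := by
  simp_rw [Finset.prod_boole, Finset.mem_univ, true_implies, ← funext_iff, mul_ite, mul_one,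
    mul_zero, Fintype.sum_ite_eq]

theorem stmt_18 (r b k : ℕ)
    (g : Fin b → (Fin r → Bool) → Bool)
    (hg : ∀ (j : Fin b) (S : Finset (Fin r)), 1 ≤ S.card → S.card ≤ k →
      cubeCoeff (fun y => bval (g j y)) S = 0)
    (F : (Fin b → Bool) → ℝ)
    (f : (Fin b × Fin r → Bool) → ℝ)
    (hf : ∀ x, f x = F fun j => g j fun i => x (j, i)) :
    ∀ S : Finset (Fin b × Fin r), 1 ≤ S.card → S.card ≤ k → cubeCoeff f S = 0 := by
  intro S hS₁ hSk
  obtain ⟨p, hp⟩ := Finset.card_pos.mp hS₁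
  have hexpand : f = fun x => ∑ w, F w * ∏ j, if (g j fun i => x (j, i)) = w j then 1 else 0 :=
    funext fun x => (hf x).trans (eq_sum_mul_prod_ite_eq F _)
  have hslice : (blockSlice S p.1).Nonempty := ⟨p.2, mem_blockSlice.mpr hp⟩
  rw [hexpand, cubeCoeff_sum]
  refine Finset.sum_eq_zero fun w _ => ?_
  have hblock := cubeCoeff_ite_eq_of_nonempty (g p.1) (w p.1) hslice
    (hg p.1 _ (Finset.card_pos.mpr hslice) ((card_blockSlice_le S p.1).trans hSk))
  rw [cubeCoeff_const_mul, cubeCoeff_prod_blocks fun j y => if g j y = w j then 1 else 0,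
    Finset.prod_eq_zero (Finset.mem_univ p.1) hblock, mul_zero]
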